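/- Let U = {±u, ±v} with u, v ∈ S¹ linearly independent. Then the closure of the convex hull of the cone-volume set C_cv(U) equals conv{ (1/2)(e₁+e₂), (1/2)(e₁+e₄), (1/2)(e₃+e₂), (1/2)(e₃+e₄) }, where indices 1,3 correspond to ±u and 2,4 to ±v. -/

import Mathlib

open MeasureTheory

noncomputable section

abbrev V2 : Type := EuclideanSpace ℝ (Fin 2)

/-- The positive hull: all nonnegative linear combinations of elements of `M`. -/
def pos {E : Type*} [AddCommMonoid E] [Module ℝ E] (M : Set E) : Set E :=
  {x | ∃ (s : Finset E) (c : E → ℝ),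
    (↑s : Set E) ⊆ M ∧ (∀ v, 0 ≤ c v) ∧ x = ∑ v ∈ s, c v • v}

/-- The polyhedron `P(U,b) = {x : ⟨uᵢ,x⟩ ≤ bᵢ for all i}`. -/
def polyP {m : ℕ} (u : Fin m → V2) (b : Fin m → ℝ) : Set V2 :=
  {x | ∀ i, (inner ℝ (u i) x : ℝ) ≤ b i}

/-- The face of `P(U,b)` with outer normal `uᵢ`. -/
def faceF {m : ℕ} (u : Fin m → V2) (b : Fin m → ℝ) (i : Fin m) : Set V2 :=
  {x ∈ polyP u b | (inner ℝ (u i) x : ℝ) = b i}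

/-- The cone-volume vector of `P(U,b)`: entry `i` is the area of `conv({0} ∪ Fᵢ(b))`. -/
def cv {m : ℕ} (u : Fin m → V2) (b : Fin m → ℝ) : Fin m → ℝ :=
  fun i => (volume (convexHull ℝ (insert 0 (faceF u b i)))).toReal

/-- The cone-volume set `C_cv(U)`. -/
def Ccv {m : ℕ} (u : Fin m → V2) : Set (Fin m → ℝ) :=
  {g | ∃ b : Fin m → ℝ, (∀ i, 0 ≤ b i) ∧
    (volume (polyP u b)).toReal = 1 ∧ g = cv u b}

/-- The subspace concentration polytope
`P_scc(U) = conv{ (1/2)(eᵢ+eⱼ) : uᵢ, uⱼ linearly independent }`. -/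
def Pscc {m : ℕ} (u : Fin m → V2) : Set (Fin m → ℝ) :=
  convexHull ℝ
    {x | ∃ i j, LinearIndependent ℝ ![u i, u j] ∧
      x = (1 / 2 : ℝ) • (Pi.single i 1 + Pi.single j 1)}

/-- Indices `i` with `uᵢ ∈ U_Δ`: some triple containing `uᵢ` positively spans `ℝ²`. -/
def DeltaIdx {m : ℕ} (u : Fin m → V2) : Set (Fin m) :=
  {i | ∃ j k, pos {u i, u j, u k} = Set.univ}

/-- Indices `i` with `uᵢ ∈ U_□`. -/
def SqIdx {m : ℕ} (u : Fin m → V2) : Set (Fin m) :=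
  {i | ¬ ∃ j k, pos {u i, u j, u k} = Set.univ}

/-- Indices `k` with `u_k ∈ U_{□,uᵢ}`: `u_k` together with some `u_l` completes
`{uᵢ, -uᵢ}` to a positively spanning quadruple. -/
def SqAdj {m : ℕ} (u : Fin m → V2) (i : Fin m) : Set (Fin m) :=
  {k | ∃ l, pos {u i, -u i, u k, u l} = Set.univ}

/-!
In the coordinates `y = (⟪u 0, x⟫, ⟪u 1, x⟫)` the polygon `P(U,b)` becomes the rectangle
`[-b 2, b 0] × [-b 3, b 1]`, so its area is `(b 0 + b 2) (b 1 + b 3) / |det|`, and the cone over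
the edge with normal `u i` becomes a triangle of area `b i (b (i+1) + b (i+3)) / (2 |det|)`.
Hence the cone-volume vectors of the polygons of area one are exactly the `γ ≥ 0` with
`γ 0 + γ 2 = γ 1 + γ 3 = 1/2` (every such `γ` comes from `b = 2 √|det| γ`). This set is already
convex and compact, and it is the square spanned by the four points `(eᵢ + eⱼ)/2`, `i` even,
`j` odd.
-/

open Set

lemma LinearEquiv.preimage_convexHull {𝕜 E F : Type*} [Semiring 𝕜] [PartialOrder 𝕜]
    [AddCommMonoid E] [Module 𝕜 E] [AddCommMonoid F] [Module 𝕜 F] (e : E ≃ₗ[𝕜] F) (s : Set F) :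
    e ⁻¹' convexHull 𝕜 s = convexHull 𝕜 (e ⁻¹' s) := by
  rw [← e.image_symm_eq_preimage, ← e.image_symm_eq_preimage]
  exact e.symm.toLinearMap.image_convexHull s

lemma addHaar_cone_preimage_segment {E : Type*} [NormedAddCommGroup E] [NormedSpace ℝ E]
    [MeasurableSpace E] [BorelSpace E] [FiniteDimensional ℝ E] (μ : Measure E) [μ.IsAddHaarMeasure]
    (f : E →ₗ[ℝ] E) (hf : LinearMap.det f ≠ 0) (P Q : E) :
    μ (convexHull ℝ (insert 0 (f ⁻¹' segment ℝ P Q))) =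
      ENNReal.ofReal |(LinearMap.det f)⁻¹| * μ (convexHull ℝ {0, P, Q}) := by
  let e := f.equivOfDetNeZero hf
  have hcone : convexHull ℝ (insert 0 (e ⁻¹' segment ℝ P Q)) = e ⁻¹' convexHull ℝ {0, P, Q} := by
    rw [← convexHull_pair, e.preimage_convexHull, e.preimage_convexHull, insert_eq, insert_eq,
      convexHull_convexHull_union_right]
    congr 1
    ext x
    simp
  rw [← Measure.addHaar_preimage_linearMap μ hf]
  exact congrArg μ hcone

lemma measurableSet_unitTriangle_prod :
    MeasurableSet {p : ℝ × ℝ | 0 ≤ p.1 ∧ 0 ≤ p.2 ∧ p.1 + p.2 ≤ 1} :=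
  (measurableSet_le measurable_const measurable_fst).inter
    ((measurableSet_le measurable_const measurable_snd).inter
      (measurableSet_le (measurable_fst.add measurable_snd) measurable_const))

lemma volume_unitTriangle_prod :
    volume {p : ℝ × ℝ | 0 ≤ p.1 ∧ 0 ≤ p.2 ∧ p.1 + p.2 ≤ 1} = ENNReal.ofReal (1 / 2) := by
  have hslice (x : ℝ) : volume (Prod.mk x ⁻¹' {p : ℝ × ℝ | 0 ≤ p.1 ∧ 0 ≤ p.2 ∧ p.1 + p.2 ≤ 1})
      = (Icc 0 1).indicator (fun x => ENNReal.ofReal (1 - x)) x := by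
    by_cases hx : x ∈ Icc (0 : ℝ) 1
    · rw [indicator_of_mem hx, ← sub_zero (1 - x), ← Real.volume_Icc]
      congr 1
      ext y
      simp only [mem_preimage, mem_ofPred_eq, mem_Icc, hx.1, true_and]
      constructor <;> rintro ⟨h, h'⟩ <;> constructor <;> linarith
    · rw [indicator_of_notMem hx, ← measure_empty (μ := (volume : Measure ℝ))]
      congr 1
      ext y
      simp only [mem_preimage, mem_ofPred_eq, mem_empty_iff_false, iff_false]
      rintro ⟨h0, h1, h2⟩
      exact hx ⟨h0, by linarith⟩
  rw [Measure.volume_eq_prod, Measure.prod_apply measurableSet_unitTriangle_prod]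
  simp_rw [hslice]
  rw [lintegral_indicator measurableSet_Icc, ← ofReal_integral_eq_lintegral_ofReal]
  · rw [integral_Icc_eq_integral_Ioc, ← intervalIntegral.integral_of_le zero_le_one,
      intervalIntegral.integral_sub intervalIntegrable_const intervalIntegral.intervalIntegrable_id]
    norm_num
  · exact (continuous_const.sub continuous_id).integrableOn_Icc
  · filter_upwards [ae_restrict_mem measurableSet_Icc] with x hx using sub_nonneg.2 hx.2

lemma volume_unitTriangle :
    volume {x : V2 | 0 ≤ x 0 ∧ 0 ≤ x 1 ∧ x 0 + x 1 ≤ 1} = ENNReal.ofReal (1 / 2) := by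
  rw [← volume_unitTriangle_prod, ← ((volume_preserving_finTwoArrow ℝ).comp
    (PiLp.volume_preserving_ofLp (Fin 2))).measure_preimage
      measurableSet_unitTriangle_prod.nullMeasurableSet]
  rfl

lemma convexHull_zero_single_single :
    convexHull ℝ {0, EuclideanSpace.single 0 1, EuclideanSpace.single 1 1}
      = {x : V2 | 0 ≤ x 0 ∧ 0 ≤ x 1 ∧ x 0 + x 1 ≤ 1} := by
  apply Subset.antisymm
  · refine convexHull_min ?_ ?_
    · rintro x (rfl | rfl | rfl) <;> simp
    · rintro x ⟨hx0, hx1, hx2⟩ y ⟨hy0, hy1, hy2⟩ a b ha hb hab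
      simp only [mem_ofPred_eq, PiLp.add_apply, PiLp.smul_apply, smul_eq_mul]
      refine ⟨by positivity, by positivity, by nlinarith⟩
  · rintro x ⟨hx0, hx1, hx2⟩
    have hx : ∑ i, ![1 - x 0 - x 1, x 0, x 1] i •
        ![0, EuclideanSpace.single 0 1, EuclideanSpace.single 1 1] i = x := by
      ext j; fin_cases j <;> simp [Fin.sum_univ_three]
    rw [← hx]
    refine (convex_convexHull ℝ _).sum_mem (fun i _ => ?_) ?_ (fun i _ => subset_convexHull ℝ _ ?_)
    · fin_cases i <;>
        simp only [Fin.isValue, Fin.zero_eta, Fin.mk_one, Fin.reduceFinMk, Matrix.cons_val_zero,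
          Matrix.cons_val_one, Matrix.cons_val, sub_nonneg] <;> linarith
    · simp only [Fin.sum_univ_three, Matrix.cons_val_zero, Matrix.cons_val_one, Matrix.cons_val]
      ring
    · fin_cases i <;> simp

lemma volume_convexHull_zero_pair (P Q : V2) :
    volume (convexHull ℝ {0, P, Q}) = ENNReal.ofReal (|P 0 * Q 1 - P 1 * Q 0| / 2) := by
  let N := Matrix.toEuclideanLin !![P 0, Q 0; P 1, Q 1]
  have hP : N (EuclideanSpace.single 0 1) = P := by
    ext i; fin_cases i <;> simp [N, Matrix.mulVec, dotProduct, Fin.sum_univ_two]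
  have hQ : N (EuclideanSpace.single 1 1) = Q := by
    ext i; fin_cases i <;> simp [N, Matrix.mulVec, dotProduct, Fin.sum_univ_two]
  have himage : N '' convexHull ℝ {0, EuclideanSpace.single 0 1, EuclideanSpace.single 1 1}
      = convexHull ℝ {0, P, Q} := by
    rw [N.image_convexHull, image_insert_eq, image_insert_eq, image_singleton, map_zero, hP, hQ]
  rw [← himage, Measure.addHaar_image_linearMap, convexHull_zero_single_single, volume_unitTriangle,
    LinearMap.det_toLpLin, Matrix.det_fin_two_of, ← ENNReal.ofReal_mul (abs_nonneg _)]
  ring_nf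

lemma volume_box_fin_two (l r : Fin 2 → ℝ) :
    volume {y : V2 | ∀ i, y i ∈ Icc (l i) (r i)} = ∏ i, ENNReal.ofReal (r i - l i) := by
  rw [← Real.volume_Icc_pi, ← (PiLp.volume_preserving_ofLp (Fin 2)).measure_preimage
    measurableSet_Icc.nullMeasurableSet]
  congr 1
  ext y
  simp [Pi.le_def, forall_and]

lemma setOf_coord_eq_segment (c p q : ℝ) (hpq : p ≤ q) :
    {y : V2 | y 0 = c ∧ y 1 ∈ Icc p q} = segment ℝ !₂[c, p] !₂[c, q] := by
  let f : ℝ →ᵃ[ℝ] V2 := AffineMap.lineMap !₂[c, 0] !₂[c, 1]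
  have hf (t : ℝ) : f t = !₂[c, t] := by
    ext i; fin_cases i <;> simp [f, AffineMap.lineMap_apply]
  rw [← hf p, ← hf q, ← image_segment, segment_eq_Icc hpq]
  ext y
  simp only [hf, mem_image, mem_ofPred_eq]
  constructor
  · rintro ⟨h0, h1⟩
    exact ⟨y 1, h1, by ext i; fin_cases i <;> simp [h0]⟩
  · rintro ⟨t, ht, rfl⟩
    simpa using ht

def innerPair (a c : V2) : V2 →ₗ[ℝ] V2 := Matrix.toEuclideanLin !![a 0, a 1; c 0, c 1]

@[simp]
lemma innerPair_apply_zero (a c x : V2) : innerPair a c x 0 = inner ℝ a x := by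
  simp [innerPair, Matrix.mulVec, dotProduct, PiLp.inner_apply, Fin.sum_univ_two, mul_comm]

@[simp]
lemma innerPair_apply_one (a c x : V2) : innerPair a c x 1 = inner ℝ c x := by
  simp [innerPair, Matrix.mulVec, dotProduct, PiLp.inner_apply, Fin.sum_univ_two, mul_comm]

lemma det_innerPair (a c : V2) : LinearMap.det (innerPair a c) = a 0 * c 1 - a 1 * c 0 := by
  rw [innerPair, LinearMap.det_toLpLin, Matrix.det_fin_two_of]

lemma det_innerPair_ne_zero {a c : V2} (h : LinearIndependent ℝ ![a, c]) :
    LinearMap.det (innerPair a c) ≠ 0 := by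
  have hrows : (!![a 0, a 1; c 0, c 1]).row = WithLp.linearEquiv 2 ℝ (Fin 2 → ℝ) ∘ ![a, c] := by
    ext i j; fin_cases i <;> fin_cases j <;> rfl
  have hunit := Matrix.linearIndependent_rows_iff_isUnit.1 (hrows ▸ h.map' _ (LinearEquiv.ker _))
  rw [innerPair, LinearMap.det_toLpLin]
  exact ((Matrix.isUnit_iff_isUnit_det _).1 hunit).ne_zero

lemma faceF_comp_perm {m : ℕ} (u : Fin m → V2) (b : Fin m → ℝ) (σ : Equiv.Perm (Fin m))
    (i : Fin m) : faceF (u ∘ σ) (b ∘ σ) i = faceF u b (σ i) := by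
  have hpoly : polyP (u ∘ σ) (b ∘ σ) = polyP u b := by
    ext x
    simp only [polyP, mem_ofPred_eq, Function.comp_apply]
    exact (σ.surjective.forall (p := fun i => inner ℝ (u i) x ≤ b i)).symm
  simp only [faceF, hpoly, Function.comp_apply]

lemma cv_comp_perm {m : ℕ} (u : Fin m → V2) (b : Fin m → ℝ) (σ : Equiv.Perm (Fin m))
    (i : Fin m) : cv (u ∘ σ) (b ∘ σ) i = cv u b (σ i) := by
  simp only [cv, faceF_comp_perm]

section Parallelogram

variable {u : Fin 4 → V2} {b : Fin 4 → ℝ}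

lemma polyP_eq_preimage_box (hu2 : u 2 = -u 0) (hu3 : u 3 = -u 1) :
    polyP u b = innerPair (u 0) (u 1) ⁻¹'
      {y | ∀ i, y i ∈ Icc (![-b 2, -b 3] i) (![b 0, b 1] i)} := by
  ext x
  simp only [polyP, mem_preimage, mem_ofPred_eq, Fin.forall_fin_two, mem_Icc, innerPair_apply_zero,
    innerPair_apply_one, Matrix.cons_val_zero, Matrix.cons_val_one]
  constructor
  · intro h
    have h2 := h 2
    have h3 := h 3
    rw [hu2, inner_neg_left] at h2
    rw [hu3, inner_neg_left] at h3
    exact ⟨⟨by linarith, h 0⟩, by linarith, h 1⟩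
  · rintro ⟨⟨h2, h0⟩, h3, h1⟩ i
    fin_cases i
    · exact h0
    · exact h1
    · show inner ℝ (u 2) x ≤ b 2
      rw [hu2, inner_neg_left]; linarith
    · show inner ℝ (u 3) x ≤ b 3
      rw [hu3, inner_neg_left]; linarith

lemma volume_polyP (hu2 : u 2 = -u 0) (hu3 : u 3 = -u 1) (hli : LinearIndependent ℝ ![u 0, u 1])
    (hb : ∀ i, 0 ≤ b i) :
    (volume (polyP u b)).toReal =
      (b 0 + b 2) * (b 1 + b 3) / |LinearMap.det (innerPair (u 0) (u 1))| := by
  rw [polyP_eq_preimage_box hu2 hu3,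
    Measure.addHaar_preimage_linearMap _ (det_innerPair_ne_zero hli), volume_box_fin_two,
    Fin.prod_univ_two, ENNReal.toReal_mul, ENNReal.toReal_mul,
    ENNReal.toReal_ofReal (abs_nonneg _), abs_inv]
  simp only [Matrix.cons_val_zero, Matrix.cons_val_one, sub_neg_eq_add]
  rw [ENNReal.toReal_ofReal (by linarith [hb 0, hb 2]),
    ENNReal.toReal_ofReal (by linarith [hb 1, hb 3])]
  ring

lemma faceF_zero_eq (hu2 : u 2 = -u 0) (hu3 : u 3 = -u 1) (hb : ∀ i, 0 ≤ b i) :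
    faceF u b 0 = innerPair (u 0) (u 1) ⁻¹' segment ℝ !₂[b 0, -b 3] !₂[b 0, b 1] := by
  rw [← setOf_coord_eq_segment _ _ _ (by linarith [hb 1, hb 3])]
  ext x
  simp only [faceF, polyP_eq_preimage_box hu2 hu3, mem_preimage, mem_ofPred_eq, Fin.forall_fin_two,
    mem_Icc, innerPair_apply_zero, innerPair_apply_one, Matrix.cons_val_zero, Matrix.cons_val_one]
  constructor
  · rintro ⟨⟨-, h⟩, he⟩
    exact ⟨he, h⟩
  · rintro ⟨he, h⟩
    exact ⟨⟨⟨by linarith [hb 0, hb 2], he.le⟩, h⟩, he⟩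

lemma cv_zero (hu2 : u 2 = -u 0) (hu3 : u 3 = -u 1) (hli : LinearIndependent ℝ ![u 0, u 1])
    (hb : ∀ i, 0 ≤ b i) :
    cv u b 0 = b 0 * (b 1 + b 3) / (2 * |LinearMap.det (innerPair (u 0) (u 1))|) := by
  rw [cv, faceF_zero_eq hu2 hu3 hb, addHaar_cone_preimage_segment _ _ (det_innerPair_ne_zero hli),
    volume_convexHull_zero_pair, ENNReal.toReal_mul, ENNReal.toReal_ofReal (abs_nonneg _),
    ENNReal.toReal_ofReal (by positivity), abs_inv]
  simp only [Matrix.cons_val_zero, Matrix.cons_val_one]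
  rw [show b 0 * b 1 - -b 3 * b 0 = b 0 * (b 1 + b 3) by ring,
    abs_of_nonneg (mul_nonneg (hb 0) (by linarith [hb 1, hb 3]))]
  ring

lemma linearIndependent_rotate (hu2 : u 2 = -u 0) (hli : LinearIndependent ℝ ![u 0, u 1]) :
    LinearIndependent ℝ ![u 1, u 2] := by
  rwa [hu2, LinearIndependent.pair_neg_right_iff, LinearIndependent.pair_symm_iff]

lemma det_innerPair_rotate (hu2 : u 2 = -u 0) :
    LinearMap.det (innerPair (u 1) (u 2)) = LinearMap.det (innerPair (u 0) (u 1)) := by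
  rw [det_innerPair, det_innerPair, hu2]
  simp only [PiLp.neg_apply]
  ring

lemma cv_apply (hu2 : u 2 = -u 0) (hu3 : u 3 = -u 1) (hli : LinearIndependent ℝ ![u 0, u 1])
    (hb : ∀ i, 0 ≤ b i) (i : Fin 4) :
    cv u b i = b i * (b (i + 1) + b (i + 3)) / (2 * |LinearMap.det (innerPair (u 0) (u 1))|) := by
  -- Shifting the indices by one gives a configuration of the same kind, with the same `|det|`.
  induction i using Fin.induction generalizing u b with
  | zero => exact cv_zero hu2 hu3 hli hb
  | succ i ih =>
    have h := ih (u := u ∘ Equiv.addRight 1) (b := b ∘ Equiv.addRight 1) hu3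
      (neg_eq_iff_eq_neg.mp hu2.symm) (linearIndependent_rotate hu2 hli) (fun i => hb _)
    rw [cv_comp_perm] at h
    simp only [Function.comp_apply, Equiv.coe_addRight] at h
    rwa [add_right_comm _ (3 : Fin 4), Fin.coeSucc_eq_succ, zero_add,
      show (1 + 1 : Fin 4) = 2 from rfl, det_innerPair_rotate hu2] at h

lemma Ccv_eq (hu2 : u 2 = -u 0) (hu3 : u 3 = -u 1) (hli : LinearIndependent ℝ ![u 0, u 1]) :
    Ccv u = {g | (∀ i, 0 ≤ g i) ∧ g 0 + g 2 = 1 / 2 ∧ g 1 + g 3 = 1 / 2} := by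
  have hD : 0 < |LinearMap.det (innerPair (u 0) (u 1))| := abs_pos.2 (det_innerPair_ne_zero hli)
  ext g
  constructor
  · rintro ⟨b, hb, hvol, rfl⟩
    rw [volume_polyP hu2 hu3 hli hb, div_eq_one_iff_eq hD.ne'] at hvol
    simp only [mem_ofPred_eq, cv_apply hu2 hu3 hli hb]
    refine ⟨fun i => ?_, ?_, ?_⟩
    · have := hb i; have := hb (i + 1); have := hb (i + 3)
      positivity
    · simp only [zero_add, Fin.reduceAdd]
      field_simp
      linear_combination hvol
    · simp only [Fin.reduceAdd]
      field_simp
      linear_combination hvol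
  · rintro ⟨hg, h02, h13⟩
    obtain ⟨r, hr, hrD⟩ : ∃ r, 0 < r ∧ r ^ 2 = |LinearMap.det (innerPair (u 0) (u 1))| :=
      ⟨√_, Real.sqrt_pos.2 hD, Real.sq_sqrt hD.le⟩
    have hb : ∀ i, 0 ≤ 2 * r * g i := fun i => by have := hg i; positivity
    refine ⟨fun i => 2 * r * g i, hb, ?_, ?_⟩
    · rw [volume_polyP hu2 hu3 hli hb, div_eq_one_iff_eq hD.ne', ← hrD]
      linear_combination (4 * r ^ 2 * (g 1 + g 3)) * h02 + 2 * r ^ 2 * h13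
    · ext i
      rw [cv_apply hu2 hu3 hli hb, ← hrD]
      have hopp : g (i + 1) + g (i + 3) = 1 / 2 := by
        fin_cases i <;>
          simp only [Fin.zero_eta, Fin.mk_one, Fin.reduceFinMk, Fin.isValue, Fin.reduceAdd] <;>
          linarith
      rw [eq_div_iff (by positivity)]
      linear_combination (-4 * r ^ 2 * g i) * hopp

end Parallelogram

def halfSum {m : ℕ} (i j : Fin m) : Fin m → ℝ := (1 / 2 : ℝ) • (Pi.single i 1 + Pi.single j 1)

lemma convexHull_halfSum_square :
    convexHull ℝ {halfSum 0 1, halfSum 0 3, halfSum 2 1, halfSum 2 3} =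
      {g : Fin 4 → ℝ | (∀ i, 0 ≤ g i) ∧ g 0 + g 2 = 1 / 2 ∧ g 1 + g 3 = 1 / 2} := by
  apply Subset.antisymm
  · refine convexHull_min ?_ ?_
    · rintro x (rfl | rfl | rfl | rfl) <;>
        exact ⟨fun i => by fin_cases i <;> simp [halfSum], by simp [halfSum], by simp [halfSum]⟩
    · rintro x ⟨hx, hx02, hx13⟩ y ⟨hy, hy02, hy13⟩ a b ha hb hab
      simp only [mem_ofPred_eq, Pi.add_apply, Pi.smul_apply, smul_eq_mul]
      refine ⟨fun i => ?_, ?_, ?_⟩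
      · have := hx i; have := hy i; positivity
      · linear_combination a * hx02 + b * hy02 + hab / 2
      · linear_combination a * hx13 + b * hy13 + hab / 2
  · rintro g ⟨hg, h02, h13⟩
    have hconv := convex_convexHull ℝ
      ({halfSum 0 1, halfSum 0 3, halfSum 2 1, halfSum 2 3} : Set (Fin 4 → ℝ))
    have hsplit : (2 * g 0) • ((2 * g 1) • halfSum 0 1 + (2 * g 3) • halfSum 0 3) +
        (2 * g 2) • ((2 * g 1) • halfSum 2 1 + (2 * g 3) • halfSum 2 3) = g := by
      ext i
      fin_cases i <;>
        simp only [halfSum, Fin.isValue, Fin.zero_eta, Fin.mk_one, Fin.reduceFinMk, Pi.add_apply,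
          Pi.smul_apply, smul_eq_mul, ne_eq, Fin.reduceEq, not_false_eq_true, Pi.single_eq_same,
          Pi.single_eq_of_ne, mul_one, mul_zero, add_zero, zero_add]
      · linear_combination 2 * g 0 * h13
      · linear_combination 2 * g 1 * h02
      · linear_combination 2 * g 2 * h13
      · linear_combination 2 * g 3 * h02
    have hnonneg (i : Fin 4) : 0 ≤ 2 * g i := by have := hg i; positivity
    rw [← hsplit]
    refine hconv (hconv ?_ ?_ (hnonneg 1) (hnonneg 3) ?_) (hconv ?_ ?_ (hnonneg 1) (hnonneg 3) ?_)
      (hnonneg 0) (hnonneg 2) ?_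
    all_goals first
      | exact subset_convexHull ℝ _ (by simp)
      | linear_combination 2 * h13
      | linear_combination 2 * h02

theorem stmt9 (u : Fin 4 → V2)
    (hu2 : u 2 = -u 0) (hu3 : u 3 = -u 1)
    (hli : LinearIndependent ℝ ![u 0, u 1]) :
    closure (convexHull ℝ (Ccv u)) =
      convexHull ℝ
        {(1 / 2 : ℝ) • (Pi.single 0 1 + Pi.single 1 1),
         (1 / 2 : ℝ) • (Pi.single 0 1 + Pi.single 3 1),
         (1 / 2 : ℝ) • (Pi.single 2 1 + Pi.single 1 1),
         (1 / 2 : ℝ) • ((Pi.single 2 1 : Fin 4 → ℝ) + Pi.single 3 1)} := by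
  rw [Ccv_eq hu2 hu3 hli, ← convexHull_halfSum_square, (convex_convexHull ℝ _).convexHull_eq,
    IsClosed.closure_eq ((toFinite _).isCompact_convexHull ℝ).isClosed]
  rfl
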